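/- For an n×n max-plus matrix A whose precedence graph has no positive-weight circuit, the solution set of A ⊗ x ⪯ x over x ∈ ℝⁿ equals {A* ⊗ u : u ∈ ℝⁿ}, where A* = ⊕_{i≥0} A^i is the Kleene star (here A⁰ = identity with 0 diagonal and -∞ off-diagonal). -/

import Mathlib

/-- Max-plus matrix product over `ℝ̄`. -/
noncomputable def mpMulE {m n p : ℕ} (A : Matrix (Fin m) (Fin n) EReal)
    (B : Matrix (Fin n) (Fin p) EReal) : Matrix (Fin m) (Fin p) EReal :=
  fun i j => ⨆ k, A i k + B k j

/-- Max-plus identity matrix. -/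
noncomputable def mpIdE (n : ℕ) : Matrix (Fin n) (Fin n) EReal :=
  fun i j => if i = j then 0 else ⊥

/-- Max-plus matrix power. -/
noncomputable def mpPowE {n : ℕ} (A : Matrix (Fin n) (Fin n) EReal) :
    ℕ → Matrix (Fin n) (Fin n) EReal
  | 0 => mpIdE n
  | r + 1 => mpMulE A (mpPowE A r)

/-- Kleene star `A* = ⊕_{r ≥ 0} Aʳ` (entrywise supremum of all max-plus powers). -/
noncomputable def mpStar {n : ℕ} (A : Matrix (Fin n) (Fin n) EReal) :
    Matrix (Fin n) (Fin n) EReal :=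
  fun i j => ⨆ r : ℕ, mpPowE A r i j

/-! Every subsolution `x` of `A ⊗ x ⪯ x` satisfies `Aʳ ⊗ x ⪯ x` for all `r`, hence
`A* ⊗ x ⪯ x`; since `A*` has nonnegative diagonal also `x ⪯ A* ⊗ x`, so `x = A* ⊗ x`.
Conversely `A ⊗ A* ⪯ A*` because `A ⊗ Aʳ = Aʳ⁺¹`, so every `A* ⊗ u` is a subsolution. -/

namespace EReal

theorem add_iSup_le {ι : Sort*} {a b : EReal} {f : ι → EReal} (h : ∀ i, a + f i ≤ b) :
    a + ⨆ i, f i ≤ b := by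
  refine add_le_of_forall_lt fun a' ha' c hc => ?_
  obtain ⟨i, hi⟩ := lt_iSup_iff.mp hc
  exact (add_le_add ha'.le hi.le).trans (h i)

theorem iSup_add_le {ι : Sort*} {a b : EReal} {f : ι → EReal} (h : ∀ i, f i + a ≤ b) :
    (⨆ i, f i) + a ≤ b := by
  rw [add_comm]
  exact add_iSup_le fun i => add_comm a (f i) ▸ h i

end EReal

section MaxPlus

variable {n : ℕ} (A : Matrix (Fin n) (Fin n) EReal)

theorem zero_le_mpStar_self (i : Fin n) : 0 ≤ mpStar A i i :=
  le_iSup_of_le 0 (by simp [mpPowE, mpIdE])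

theorem add_mpStar_le (i j k : Fin n) : A i j + mpStar A j k ≤ mpStar A i k :=
  EReal.add_iSup_le fun r =>
    calc A i j + mpPowE A r j k ≤ mpPowE A (r + 1) i k :=
          le_iSup (fun l => A i l + mpPowE A r l k) j
      _ ≤ mpStar A i k := le_iSup (fun s => mpPowE A s i k) (r + 1)

variable {A}

theorem mpPowE_add_le_of_subsolution {x : Fin n → EReal} (hx : ∀ i, (⨆ j, A i j + x j) ≤ x i)
    (r : ℕ) (i j : Fin n) : mpPowE A r i j + x j ≤ x i := by
  induction r generalizing i with
  | zero =>
    by_cases h : i = j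
    · subst h; simp [mpPowE, mpIdE]
    · simp [mpPowE, mpIdE, h]
  | succ r ih =>
    refine EReal.iSup_add_le fun k => ?_
    calc A i k + mpPowE A r k j + x j = A i k + (mpPowE A r k j + x j) := add_assoc _ _ _
      _ ≤ A i k + x k := add_le_add_right (ih k) _
      _ ≤ x i := (le_iSup (fun l => A i l + x l) k).trans (hx i)

theorem mpStar_add_le_of_subsolution {x : Fin n → EReal} (hx : ∀ i, (⨆ j, A i j + x j) ≤ x i)
    (i j : Fin n) : mpStar A i j + x j ≤ x i :=
  EReal.iSup_add_le fun r => mpPowE_add_le_of_subsolution hx r i j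

theorem eq_mpStar_mulVec_of_subsolution {x : Fin n → EReal}
    (hx : ∀ i, (⨆ j, A i j + x j) ≤ x i) (i : Fin n) : x i = ⨆ j, mpStar A i j + x j := by
  refine le_antisymm ?_ (iSup_le (mpStar_add_le_of_subsolution hx i))
  calc x i = 0 + x i := (zero_add _).symm
    _ ≤ mpStar A i i + x i := add_le_add_left (zero_le_mpStar_self A i) _
    _ ≤ ⨆ j, mpStar A i j + x j := le_iSup (fun j => mpStar A i j + x j) i

variable (A)

theorem mpStar_mulVec_subsolution (u : Fin n → EReal) (i : Fin n) :
    (⨆ j, A i j + ⨆ k, mpStar A j k + u k) ≤ ⨆ k, mpStar A i k + u k :=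
  iSup_le fun j => EReal.add_iSup_le fun k =>
    calc A i j + (mpStar A j k + u k) = A i j + mpStar A j k + u k := (add_assoc _ _ _).symm
      _ ≤ mpStar A i k + u k := add_le_add_left (add_mpStar_le A i j k) _
      _ ≤ ⨆ l, mpStar A i l + u l := le_iSup (fun l => mpStar A i l + u l) k

end MaxPlus

theorem stmt10_general {n : ℕ} (A : Matrix (Fin n) (Fin n) EReal) :
    ∀ x : Fin n → ℝ, (∀ i, (⨆ j, A i j + (x j : EReal)) ≤ (x i : EReal)) ↔
      ∃ u : Fin n → ℝ, ∀ i, (x i : EReal) = ⨆ j, mpStar A i j + (u j : EReal) := by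
  intro x
  constructor
  · intro hx
    exact ⟨x, eq_mpStar_mulVec_of_subsolution hx⟩
  · rintro ⟨u, hu⟩ i
    simp only [hu]
    exact mpStar_mulVec_subsolution A _ i

/-- If the precedence graph of an `n×n` max-plus matrix `A` (entries in `ℝ ∪ {-∞}`) has
no positive-weight circuit, then the solution set of `A ⊗ x ⪯ x` over `x ∈ ℝⁿ` is
`{A* ⊗ u : u ∈ ℝⁿ}`. -/
theorem stmt10 {n : ℕ} (A : Matrix (Fin n) (Fin n) EReal) (hA : ∀ i j, A i j ≠ ⊤)
    (hnc : ¬ ∃ (r : ℕ) (ρ : ℕ → Fin n), 1 ≤ r ∧ ρ r = ρ 0 ∧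
        0 < ∑ t ∈ Finset.range r, A (ρ (t + 1)) (ρ t)) :
    ∀ x : Fin n → ℝ, (∀ i, (⨆ j, A i j + (x j : EReal)) ≤ (x i : EReal)) ↔
      ∃ u : Fin n → ℝ, ∀ i, (x i : EReal) = ⨆ j, mpStar A i j + (u j : EReal) :=
  stmt10_general A
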